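/- arXiv:2001.00510 — 3 statements merged into one kernel-verified Lean document; each statement's English description precedes it below -/
import Mathlib

section
/- (Necessity.) Assume σ_{α0} < σ_{α1} and σ_β ≥ σ_max. Then there is no σ < σ_max with R₀(σ) = R₁(σ); i.e., no admissible treadmilling solution exists. -/
/-!
Clearing denominators in `R₀(σ) = R₁(σ)` shows that `W*(σ)` is the mean of `W*(σ_{α0})` and
`W*(σ_{α1})` with weights `t B₁` and `B₀`, where `t = Δσ / (σ_asymp - σ)`, while `W*(σ_β)` is
the same mean with weights `B₁` and `B₀`. For `σ < σ_max` we have `t < 1`, so less weight sits on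
the smaller value `W*(σ_{α0})` and `W*(σ) > W*(σ_β)`; monotonicity of `W*` then forces
`σ > σ_β ≥ σ_max`.
-/

open Set Filter

theorem eq_weighted_mean_of_balance {w a₀ a₁ p r : ℝ} (h : p * (a₀ - w) = r * (w - a₁))
    (hpr : p + r ≠ 0) : w = (p * a₀ + r * a₁) / (p + r) := by
  rw [eq_div_iff hpr]
  linarith

theorem weighted_mean_lt_of_weight_lt {a₀ a₁ p q r : ℝ} (ha : a₀ < a₁) (hp : 0 ≤ p)
    (hpq : p < q) (hr : 0 < r) :
    (q * a₀ + r * a₁) / (q + r) < (p * a₀ + r * a₁) / (p + r) := by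
  rw [div_lt_div_iff₀ (by linarith) (by linarith)]
  nlinarith [mul_pos hr (mul_pos (sub_pos.2 hpq) (sub_pos.2 ha))]

theorem stmt17_general (Wstar : ℝ → ℝ)
    (hmono : StrictMono Wstar)
    (B0 B1 σmax σasymp σα0 σα1 σβ Δσ β : ℝ)
    (hB0 : 0 < B0) (hB1 : 0 < B1) (hβ : β = B0 / B1)
    (hΔσ : Δσ = σasymp - σmax) (hΔσpos : 0 < Δσ)
    (hσβ : Wstar σβ = (1 / (1 + β)) * Wstar σα0 + (β / (1 + β)) * Wstar σα1)
    (R0 R1 : ℝ → ℝ)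
    (hR0 : ∀ σ : ℝ, R0 σ = -(Δσ / B0) * (Wstar σ - Wstar σα0) / (σasymp - σ))
    (hR1 : ∀ σ : ℝ, R1 σ = (1 / B1) * (Wstar σ - Wstar σα1))
    (hα : σα0 < σα1) (hβmax : σmax ≤ σβ) :
    ¬ ∃ σ : ℝ, σ < σmax ∧ R0 σ = R1 σ := by
  rintro ⟨σ, hσ, heq⟩
  have hD : Δσ < σasymp - σ := by rw [hΔσ]; linarith
  have hDpos : 0 < σasymp - σ := hΔσpos.trans hD
  have hbalance :
      Δσ * B1 / (σasymp - σ) * (Wstar σα0 - Wstar σ) = B0 * (Wstar σ - Wstar σα1) := by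
    rw [hR0, hR1] at heq
    field_simp at heq ⊢
    linarith
  have hweight : Δσ * B1 / (σasymp - σ) < B1 := by
    rw [div_lt_iff₀ hDpos]
    nlinarith
  have hWσ := eq_weighted_mean_of_balance hbalance (by positivity)
  have hWσβ : Wstar σβ = (B1 * Wstar σα0 + B0 * Wstar σα1) / (B1 + B0) := by
    rw [hσβ, hβ]
    field_simp
  have hlt := weighted_mean_lt_of_weight_lt (hmono hα) (by positivity) hweight hB0
  rw [← hWσ, ← hWσβ] at hlt
  exact (hmono (hσ.trans_le hβmax)).not_gt hlt

/-- Necessity: if σ_{α0} < σ_{α1} and σ_β ≥ σ_max, there is no admissible treadmilling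
solution, i.e. no σ < σ_max with R₀(σ) = R₁(σ). -/
theorem stmt17 (Wstar : ℝ → ℝ)
    (hmono : StrictMono Wstar) (hcont : Continuous Wstar) (hsurj : Function.Surjective Wstar)
    (B0 B1 σmax σasymp σα0 σα1 σβ Δσ β : ℝ)
    (hB0 : 0 < B0) (hB1 : 0 < B1) (hβ : β = B0 / B1)
    (hΔσ : Δσ = σasymp - σmax) (hΔσpos : 0 < Δσ)
    (hσβ : Wstar σβ = (1 / (1 + β)) * Wstar σα0 + (β / (1 + β)) * Wstar σα1)
    (R0 R1 : ℝ → ℝ)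
    (hR0 : ∀ σ : ℝ, R0 σ = -(Δσ / B0) * (Wstar σ - Wstar σα0) / (σasymp - σ))
    (hR1 : ∀ σ : ℝ, R1 σ = (1 / B1) * (Wstar σ - Wstar σα1))
    (hR0anti : StrictAntiOn R0 (Ioo σα0 σasymp))
    (hα : σα0 < σα1) (hβmax : σmax ≤ σβ) :
    ¬ ∃ σ : ℝ, σ < σmax ∧ R0 σ = R1 σ :=
  stmt17_general Wstar hmono B0 B1 σmax σasymp σα0 σα1 σβ Δσ β hB0 hB1 hβ hΔσ hΔσpos hσβ R0 R1 hR0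
    hR1 hα hβmax
end

section
/- (Existence, case M_{B,0} > M_{B,1}.) Assume σ_{α1} < σ_{α0} and σ_β < σ_max. Then there exists σ_TM with σ_{α1} < σ_TM < min(σ_{α0}, σ_max) such that R₀(σ_TM) = R₁(σ_TM), and R₀(σ_TM) = R₁(σ_TM) > 0. -/
/-!
Intermediate value theorem for `R₀ - R₁` on `[σ_{α1}, min σ_{α0} σ_max]`, where `R₀` is
continuous because `σ_asymp` lies to the right of `σ_max`. At `σ_{α1}` we have `R₁ = 0 < R₀`.
At the right end `R₀ < R₁`: at `σ_{α0}` because `R₀ = 0 < R₁` there, at `σ_max` because there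
`R₀ = (W*(σ_{α0}) - W*(σ_max))/B₀`, and `R₀ < R₁` is a rearrangement of `W*(σ_β) < W*(σ_max)`.
-/

open Set Filter

theorem lt_weighted_avg {a b β : ℝ} (hβ : 0 < β) (hba : b < a) :
    b < 1 / (1 + β) * a + β / (1 + β) * b := by
  have h : 1 / (1 + β) * a + β / (1 + β) * b = b + (a - b) / (1 + β) := by
    field_simp; ring
  rw [h]
  linarith [div_pos (sub_pos.mpr hba) (by linarith : (0 : ℝ) < 1 + β)]

theorem sub_div_lt_sub_div_of_weighted_avg_lt {B0 B1 a b x : ℝ} (hB0 : 0 < B0) (hB1 : 0 < B1)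
    (h : 1 / (1 + B0 / B1) * a + B0 / B1 / (1 + B0 / B1) * b < x) :
    (a - x) / B0 < (x - b) / B1 := by
  have hw : 1 / (1 + B0 / B1) * a + B0 / B1 / (1 + B0 / B1) * b =
      (B1 * a + B0 * b) / (B1 + B0) := by
    field_simp
  rw [hw, div_lt_iff₀ (by positivity)] at h
  rw [div_lt_div_iff₀ hB0 hB1]
  nlinarith

theorem exists_mem_Ioo_eq_of_lt_of_gt {f g : ℝ → ℝ} {a b : ℝ} (hab : a ≤ b)
    (hf : ContinuousOn f (Icc a b)) (hg : ContinuousOn g (Icc a b))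
    (ha : g a < f a) (hb : f b < g b) : ∃ c ∈ Ioo a b, f c = g c := by
  obtain ⟨c, hc, hfg⟩ := intermediate_value_Ioo' hab (hf.sub hg)
    ⟨sub_neg.mpr hb, sub_pos.mpr ha⟩
  exact ⟨c, hc, sub_eq_zero.mp hfg⟩

theorem stmt18_general (Wstar : ℝ → ℝ)
    (hmono : StrictMono Wstar) (hcont : Continuous Wstar)
    (B0 B1 σmax σasymp σα0 σα1 σβ Δσ β : ℝ)
    (hB0 : 0 < B0) (hB1 : 0 < B1) (hβ : β = B0 / B1)
    (hΔσ : Δσ = σasymp - σmax) (hΔσpos : 0 < Δσ)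
    (hσβ : Wstar σβ = (1 / (1 + β)) * Wstar σα0 + (β / (1 + β)) * Wstar σα1)
    (R0 R1 : ℝ → ℝ)
    (hR0 : ∀ σ : ℝ, R0 σ = -(Δσ / B0) * (Wstar σ - Wstar σα0) / (σasymp - σ))
    (hR1 : ∀ σ : ℝ, R1 σ = (1 / B1) * (Wstar σ - Wstar σα1))
    (hα : σα1 < σα0) (hβmax : σβ < σmax) :
    ∃ σTM : ℝ, (σα1 < σTM ∧ σTM < min σα0 σmax) ∧ R0 σTM = R1 σTM ∧ 0 < R1 σTM := by
  subst hβ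
  have hR1_pos : ∀ σ, σα1 < σ → 0 < R1 σ := fun σ hσ =>
    (hR1 σ).symm ▸ mul_pos (one_div_pos.mpr hB1) (sub_pos.mpr (hmono hσ))
  have hσβ_gt : σα1 < σβ :=
    hmono.lt_iff_lt.mp (hσβ ▸ lt_weighted_avg (by positivity) (hmono hα))
  have hm : σα1 < min σα0 σmax := lt_min hα (hσβ_gt.trans hβmax)
  have hm_lt : min σα0 σmax < σasymp := (min_le_right _ _).trans_lt (by linarith)
  have hR0_cont : ContinuousOn R0 (Icc σα1 (min σα0 σmax)) := by
    rw [funext hR0]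
    exact (by fun_prop : Continuous _).continuousOn.div (by fun_prop)
      fun σ hσ => (sub_pos.mpr (hσ.2.trans_lt hm_lt)).ne'
  have hR1_cont : Continuous R1 := by
    rw [funext hR1]
    fun_prop
  have hstart : R1 σα1 < R0 σα1 := by
    rw [hR0, hR1, sub_self, mul_zero, neg_mul, ← mul_neg, neg_sub]
    exact div_pos (mul_pos (div_pos hΔσpos hB0) (sub_pos.mpr (hmono hα))) (by linarith)
  have hend : R0 (min σα0 σmax) < R1 (min σα0 σmax) := by
    rcases min_choice σα0 σmax with h | h <;> rw [h]
    · simpa only [hR0, sub_self, mul_zero, zero_div] using hR1_pos σα0 hα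
    · rw [hR0, hR1, ← hΔσ, one_div_mul_eq_div,
        show -(Δσ / B0) * (Wstar σmax - Wstar σα0) / Δσ = (Wstar σα0 - Wstar σmax) / B0 by
          field_simp; ring]
      exact sub_div_lt_sub_div_of_weighted_avg_lt hB0 hB1 (hσβ ▸ hmono hβmax)
  obtain ⟨σTM, hmem, heq⟩ :=
    exists_mem_Ioo_eq_of_lt_of_gt hm.le hR0_cont hR1_cont.continuousOn hstart hend
  exact ⟨σTM, hmem, heq, hR1_pos σTM hmem.1⟩

/-- Existence of a treadmilling force in the case σ_{α1} < σ_{α0}, σ_β < σ_max: there is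
σ_TM ∈ (σ_{α1}, min(σ_{α0}, σ_max)) with R₀(σ_TM) = R₁(σ_TM) > 0. -/
theorem stmt18 (Wstar : ℝ → ℝ)
    (hmono : StrictMono Wstar) (hcont : Continuous Wstar) (hsurj : Function.Surjective Wstar)
    (B0 B1 σmax σasymp σα0 σα1 σβ Δσ β : ℝ)
    (hB0 : 0 < B0) (hB1 : 0 < B1) (hβ : β = B0 / B1)
    (hΔσ : Δσ = σasymp - σmax) (hΔσpos : 0 < Δσ)
    (hσβ : Wstar σβ = (1 / (1 + β)) * Wstar σα0 + (β / (1 + β)) * Wstar σα1)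
    (R0 R1 : ℝ → ℝ)
    (hR0 : ∀ σ : ℝ, R0 σ = -(Δσ / B0) * (Wstar σ - Wstar σα0) / (σasymp - σ))
    (hR1 : ∀ σ : ℝ, R1 σ = (1 / B1) * (Wstar σ - Wstar σα1))
    (hα : σα1 < σα0) (hβmax : σβ < σmax) :
    ∃ σTM : ℝ, (σα1 < σTM ∧ σTM < min σα0 σmax) ∧ R0 σTM = R1 σTM ∧ 0 < R1 σTM :=
  stmt18_general Wstar hmono hcont B0 B1 σmax σasymp σα0 σα1 σβ Δσ β hB0 hB1 hβ hΔσ hΔσpos hσβ R0 R1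
    hR0 hR1 hα hβmax
end

section
/- (Linearized stability.) Suppose σ_TM < σ_max is a treadmilling force and set F(σ_TM) = K λ̂(σ_TM)·(R₁'(σ_TM) − R₀'(σ_TM))/(K ℓ_TM λ̂'(σ_TM) + 1) with ℓ_TM = ℓ̄(σ_TM) > 0. Then F(σ_TM) > 0 if and only if R₁'(σ_TM) > R₀'(σ_TM); consequently the linearized perturbation equation δℓ' = −F(σ_TM) δℓ has exponentially decaying solutions iff R₁'(σ_TM) > R₀'(σ_TM). -/
open Filter

/-
The treadmilling length ℓ_TM and the denominator K ℓ_TM λ̂'(σ_TM) + 1 are positive, and so is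
K λ̂(σ_TM); hence F(σ_TM) has the sign of R₁'(σ_TM) − R₀'(σ_TM). The perturbation equation is
linear with solutions δℓ(0) e^{−F t}: they all decay exponentially when F > 0, while for F ≤ 0
the solution e^{−F t} stays ≥ 1 and so admits no bound C e^{−a t} with a > 0.
-/

theorem hasDerivAt_exp_const_mul (c t : ℝ) :
    HasDerivAt (fun t => Real.exp (c * t)) (c * Real.exp (c * t)) t := by
  simpa [mul_comm] using ((hasDerivAt_id t).const_mul c).exp

theorem eq_mul_exp_of_hasDerivAt_mul {c : ℝ} {f : ℝ → ℝ}
    (hf : ∀ t, HasDerivAt f (c * f t) t) (t : ℝ) : f t = f 0 * Real.exp (c * t) := by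
  have hquot : ∀ t, HasDerivAt (fun t => f t / Real.exp (c * t)) 0 t := fun t => by
    refine ((hf t).div (hasDerivAt_exp_const_mul c t) (Real.exp_pos _).ne').congr_deriv ?_
    ring
  have hconst := is_const_of_deriv_eq_zero (fun t => (hquot t).differentiableAt)
    (fun t => (hquot t).deriv) t 0
  simp only [mul_zero, Real.exp_zero, div_one] at hconst
  rw [← hconst, div_mul_cancel₀ _ (Real.exp_pos _).ne']

theorem abs_le_mul_exp_of_hasDerivAt_neg_mul {F : ℝ} {f : ℝ → ℝ}
    (hf : ∀ t, HasDerivAt f (-F * f t) t) (t : ℝ) : |f t| ≤ |f 0| * Real.exp (-F * t) := by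
  rw [eq_mul_exp_of_hasDerivAt_mul hf t, abs_mul, abs_of_pos (Real.exp_pos _)]

theorem pos_of_exp_neg_mul_le_mul_exp {F C a : ℝ} (ha : 0 < a)
    (hbound : ∀ t, 0 ≤ t → Real.exp (-F * t) ≤ C * Real.exp (-a * t)) : 0 < F := by
  by_contra! hF
  have hdecay : Tendsto (fun t => C * Real.exp (-a * t)) atTop (nhds 0) := by
    simpa using (Real.tendsto_exp_atBot.comp
      (tendsto_id.const_mul_atTop_of_neg (neg_neg_of_pos ha))).const_mul C
  obtain ⟨t, hsmall, ht⟩ :=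
    ((hdecay.eventually (gt_mem_nhds one_pos)).and (eventually_ge_atTop (0 : ℝ))).exists
  have hone : 1 ≤ Real.exp (-F * t) := Real.one_le_exp (by nlinarith)
  linarith [hbound t ht]

theorem exp_decay_iff_pos (F : ℝ) :
    (∀ f : ℝ → ℝ, (∀ t, HasDerivAt f (-F * f t) t) →
        ∃ C a : ℝ, 0 < a ∧ ∀ t, 0 ≤ t → |f t| ≤ C * Real.exp (-a * t)) ↔ 0 < F := by
  constructor
  · intro hdecay
    obtain ⟨C, a, ha, hbound⟩ := hdecay _ (hasDerivAt_exp_const_mul (-F))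
    exact pos_of_exp_neg_mul_le_mul_exp ha fun t ht => by
      simpa [abs_of_pos (Real.exp_pos _)] using hbound t ht
  · exact fun hF f hf => ⟨|f 0|, F, hF, fun t _ => abs_le_mul_exp_of_hasDerivAt_neg_mul hf t⟩

theorem stmt19_general (lam lam' : ℝ → ℝ) (K σmax σTM : ℝ) (hK : 0 < K)
    (hlam_pos : ∀ σ : ℝ, 0 < lam σ)
    (hlam'pos : ∀ σ : ℝ, 0 < lam' σ)
    (hσTM : σTM < σmax)
    (R0' R1' : ℝ → ℝ)
    (ℓTM F : ℝ)
    (hℓTM : ℓTM = (σmax - σTM) / (K * lam σTM))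
    (hF : F = K * lam σTM * (R1' σTM - R0' σTM) / (K * ℓTM * lam' σTM + 1)) :
    (0 < F ↔ R0' σTM < R1' σTM) ∧
      ((∀ δℓ : ℝ → ℝ, (∀ t : ℝ, HasDerivAt δℓ (-F * δℓ t) t) →
          ∃ C a : ℝ, 0 < a ∧ ∀ t : ℝ, 0 ≤ t → |δℓ t| ≤ C * Real.exp (-a * t)) ↔
        R0' σTM < R1' σTM) := by
  have hKlam : 0 < K * lam σTM := mul_pos hK (hlam_pos σTM)
  have hℓpos : 0 < ℓTM := hℓTM ▸ div_pos (sub_pos.2 hσTM) hKlam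
  have hden : 0 < K * ℓTM * lam' σTM + 1 := by
    have := hlam'pos σTM
    positivity
  have hsign : 0 < F ↔ R0' σTM < R1' σTM := by
    rw [hF, div_pos_iff_of_pos_right hden, mul_pos_iff_of_pos_left hKlam, sub_pos]
  exact ⟨hsign, (exp_decay_iff_pos F).trans hsign⟩

/-- Linearized stability: F(σ_TM) > 0 iff R₁'(σ_TM) > R₀'(σ_TM); consequently all solutions
of δℓ' = −F(σ_TM) δℓ decay exponentially iff R₁'(σ_TM) > R₀'(σ_TM). -/
theorem stmt19 (lam lam' : ℝ → ℝ) (K σmax σTM : ℝ) (hK : 0 < K)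
    (hlam_pos : ∀ σ : ℝ, 0 < lam σ)
    (hlam' : ∀ σ : ℝ, HasDerivAt lam (lam' σ) σ)
    (hlam'pos : ∀ σ : ℝ, 0 < lam' σ)
    (hσTM : σTM < σmax)
    (R0 R1 R0' R1' : ℝ → ℝ)
    (hR0' : ∀ σ : ℝ, HasDerivAt R0 (R0' σ) σ)
    (hR1' : ∀ σ : ℝ, HasDerivAt R1 (R1' σ) σ)
    (hTM : R0 σTM = R1 σTM)
    (ℓTM F : ℝ)
    (hℓTM : ℓTM = (σmax - σTM) / (K * lam σTM))
    (hF : F = K * lam σTM * (R1' σTM - R0' σTM) / (K * ℓTM * lam' σTM + 1)) :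
    (0 < F ↔ R0' σTM < R1' σTM) ∧
      ((∀ δℓ : ℝ → ℝ, (∀ t : ℝ, HasDerivAt δℓ (-F * δℓ t) t) →
          ∃ C a : ℝ, 0 < a ∧ ∀ t : ℝ, 0 ≤ t → |δℓ t| ≤ C * Real.exp (-a * t)) ↔
        R0' σTM < R1' σTM) :=
  stmt19_general lam lam' K σmax σTM hK hlam_pos hlam'pos hσTM R0' R1' ℓTM F hℓTM hF
end
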